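/- Let π, π⋆ satisfy the p-th order Taylor regularity assumption with constant L_{∂^p π}, let the expert closed-loop system be η-locally δ-ISS with class-K gain γ satisfying γ(x) ≤ O(x^{1/r}) for some r ≥ 1 with p+1−r > 0, and choose μ, α > 0 so that 2(L_{∂^p π}/(p+1)!) x^{p+1} + (x/μ)^r ≤ γ⁻¹(x) for all 0 ≤ x ≤ α ≤ 1/2. If max_{t<T} max_{j≤p} μ((2/j!)‖∂_x^j Δ_t^{π⋆}(ξ;π)‖)^{1/r} ≤ α and max_{t<T} max_{j≤p} [2L_{∂^p π} μ^{p+1}/(p+1)! · ((2/j!)‖∂_x^j Δ_t^{π⋆}(ξ;π)‖)^{(p+1)/r} + (2/j!)‖∂_x^j Δ_t^{π⋆}(ξ;π)‖] ≤ η, then for all 1 ≤ t ≤ T, ‖x_t^{π⋆}(ξ) − x_t^π(ξ)‖ ≤ max_{k<t} max_{j≤p} μ((2/j!)‖∂_x^j Δ_t^{π⋆}(ξ;π)‖)^{1/r}. -/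
import Mathlib


open scoped BigOperators

/-- Closed-loop trajectory of `x_{t+1} = f(x_t, π(x_t) + Δ_t)` from initial condition `ξ`. -/
noncomputable def traj {d m : ℕ}
    (f : EuclideanSpace ℝ (Fin d) → EuclideanSpace ℝ (Fin m) → EuclideanSpace ℝ (Fin d))
    (π : EuclideanSpace ℝ (Fin d) → EuclideanSpace ℝ (Fin m))
    (Δ : ℕ → EuclideanSpace ℝ (Fin m)) (ξ : EuclideanSpace ℝ (Fin d)) :
    ℕ → EuclideanSpace ℝ (Fin d)
  | 0 => ξ
  | t + 1 => f (traj f π Δ ξ t) (π (traj f π Δ ξ t) + Δ t)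

/-- Class-K function: continuous, strictly increasing on `[0,∞)`, vanishing at `0`. -/
def ClassK (γ : ℝ → ℝ) : Prop :=
  ContinuousOn γ (Set.Ici 0) ∧ StrictMonoOn γ (Set.Ici 0) ∧ γ 0 = 0

/-- Class-KL function. -/
def ClassKL (β : ℝ → ℕ → ℝ) : Prop :=
  (∀ t, ClassK fun s => β s t) ∧ ∀ s, 0 ≤ s → Antitone fun t => β s t

/-- `η`-local incremental input-to-state stability of the closed loop under `πs`. -/
def LocallyDeltaISS {d m : ℕ}
    (f : EuclideanSpace ℝ (Fin d) → EuclideanSpace ℝ (Fin m) → EuclideanSpace ℝ (Fin d))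
    (πs : EuclideanSpace ℝ (Fin d) → EuclideanSpace ℝ (Fin m))
    (η : ℝ) (β : ℝ → ℕ → ℝ) (γ : ℝ → ℝ) : Prop :=
  ClassKL β ∧ ClassK γ ∧
    ∀ (ξ₁ ξ₂ : EuclideanSpace ℝ (Fin d)) (Δ : ℕ → EuclideanSpace ℝ (Fin m)),
      (∀ t, ‖Δ t‖ ≤ η) → ∀ t, ∀ ht : 0 < t,
        ‖traj f πs Δ ξ₁ t - traj f πs (fun _ => 0) ξ₂ t‖ ≤
          β ‖ξ₁ - ξ₂‖ t +
            γ ((Finset.range t).sup' (Finset.nonempty_range_iff.mpr ht.ne') fun k => ‖Δ k‖)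


open scoped BigOperators

lemma geomAux (n : ℕ) (x : ℝ) (hx0 : 0 ≤ x) (hx : x ≤ 1/2) :
    ∑ j ∈ Finset.range n, x ^ j ≤ 2 := by
  induction n with
  | zero => norm_num
  | succ n ih =>
    rw [geom_sum_succ]
    have hs : 0 ≤ ∑ j ∈ Finset.range n, x ^ j :=
      Finset.sum_nonneg fun j _ => pow_nonneg hx0 j
    nlinarith

lemma taylorDiff {d m : ℕ} (p : ℕ) (L : ℝ)
    (π πs : EuclideanSpace ℝ (Fin d) → EuclideanSpace ℝ (Fin m))
    (h1 : ∀ x x₀ : EuclideanSpace ℝ (Fin d),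
        ‖π x - ∑ j ∈ Finset.range (p + 1), ((j.factorial : ℝ))⁻¹ •
            (iteratedFDeriv ℝ j π x₀) (fun _ => x - x₀)‖ ≤
          L / ((p + 1).factorial : ℝ) * ‖x - x₀‖ ^ (p + 1))
    (h2 : ∀ x x₀ : EuclideanSpace ℝ (Fin d),
        ‖πs x - ∑ j ∈ Finset.range (p + 1), ((j.factorial : ℝ))⁻¹ •
            (iteratedFDeriv ℝ j πs x₀) (fun _ => x - x₀)‖ ≤
          L / ((p + 1).factorial : ℝ) * ‖x - x₀‖ ^ (p + 1))
    (x x₀ : EuclideanSpace ℝ (Fin d)) :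
    ‖π x - πs x‖ ≤ 2 * (L / ((p + 1).factorial : ℝ)) * ‖x - x₀‖ ^ (p + 1) +
      ∑ j ∈ Finset.range (p + 1), ((j.factorial : ℝ))⁻¹ *
        ‖iteratedFDeriv ℝ j π x₀ - iteratedFDeriv ℝ j πs x₀‖ * ‖x - x₀‖ ^ j := by
  set Tπ := ∑ j ∈ Finset.range (p + 1), ((j.factorial : ℝ))⁻¹ •
      (iteratedFDeriv ℝ j π x₀) (fun _ => x - x₀) with hTπ
  set Tπs := ∑ j ∈ Finset.range (p + 1), ((j.factorial : ℝ))⁻¹ •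
      (iteratedFDeriv ℝ j πs x₀) (fun _ => x - x₀) with hTπs
  have hsplit : π x - πs x = (π x - Tπ) - (πs x - Tπs) + (Tπ - Tπs) := by abel
  have hdiff : ‖Tπ - Tπs‖ ≤ ∑ j ∈ Finset.range (p + 1), ((j.factorial : ℝ))⁻¹ *
      ‖iteratedFDeriv ℝ j π x₀ - iteratedFDeriv ℝ j πs x₀‖ * ‖x - x₀‖ ^ j := by
    have heq : Tπ - Tπs = ∑ j ∈ Finset.range (p + 1), ((j.factorial : ℝ))⁻¹ •
        ((iteratedFDeriv ℝ j π x₀ - iteratedFDeriv ℝ j πs x₀) (fun _ => x - x₀)) := by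
      rw [hTπ, hTπs, ← Finset.sum_sub_distrib]
      refine Finset.sum_congr rfl fun j _ => ?_
      rw [← smul_sub, ContinuousMultilinearMap.sub_apply]
    rw [heq]
    refine (norm_sum_le _ _).trans (Finset.sum_le_sum fun j _ => ?_)
    rw [norm_smul]
    have hop := ContinuousMultilinearMap.le_opNorm
      (iteratedFDeriv ℝ j π x₀ - iteratedFDeriv ℝ j πs x₀) (fun _ => x - x₀)
    have hprod : (∏ _i : Fin j, ‖x - x₀‖) = ‖x - x₀‖ ^ j := by
      simp [Finset.prod_const]
    rw [hprod] at hop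
    have hfac : ‖((j.factorial : ℝ))⁻¹‖ = ((j.factorial : ℝ))⁻¹ := by
      rw [Real.norm_eq_abs, abs_of_nonneg]; positivity
    rw [hfac, mul_assoc]
    exact mul_le_mul_of_nonneg_left hop (by positivity)
  have n1 := h1 x x₀
  have n2 := h2 x x₀
  calc ‖π x - πs x‖ = ‖(π x - Tπ) - (πs x - Tπs) + (Tπ - Tπs)‖ := by rw [← hsplit]
    _ ≤ ‖(π x - Tπ) - (πs x - Tπs)‖ + ‖Tπ - Tπs‖ := norm_add_le _ _
    _ ≤ ‖π x - Tπ‖ + ‖πs x - Tπs‖ + ‖Tπ - Tπs‖ := by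
        linarith [norm_sub_le (π x - Tπ) (πs x - Tπs)]
    _ ≤ _ := by linarith
/-- Theorem 4 of TaSIL (sup-linear imitation gap / slowly decaying class-K gains).
`Δd j t = ‖∂_x^j π(x_t^{π⋆}(ξ)) − ∂_x^j π⋆(x_t^{π⋆}(ξ))‖` is the `j`-th derivative
discrepancy along the expert trajectory. The relation
`2 (L/(p+1)!) x^{p+1} + (x/μ)^r ≤ γ⁻¹(x)` on `[0,α]` is expressed equivalently as
`γ (2 (L/(p+1)!) x^{p+1} + (x/μ)^r) ≤ x`. -/
theorem stmt5 {d m : ℕ} (p T : ℕ) (r η μ α L C : ℝ)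
    (f : EuclideanSpace ℝ (Fin d) → EuclideanSpace ℝ (Fin m) → EuclideanSpace ℝ (Fin d))
    (πs π : EuclideanSpace ℝ (Fin d) → EuclideanSpace ℝ (Fin m))
    (ξ : EuclideanSpace ℝ (Fin d)) (β : ℝ → ℕ → ℝ) (γ : ℝ → ℝ)
    (hr : 1 ≤ r) (hpr : r < (p : ℝ) + 1) (hη : 0 < η) (hμ : 0 < μ)
    (hα0 : 0 < α) (hα : α ≤ 1 / 2) (hL : 0 ≤ L) (hC : 0 < C)
    (hISS : LocallyDeltaISS f πs η β γ)
    (hγO : ∀ x : ℝ, 0 ≤ x → x ≤ 1 → γ x ≤ C * x ^ (1 / r))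
    (hsmooth : ContDiff ℝ (p : ℕ∞) π) (hsmooth' : ContDiff ℝ (p : ℕ∞) πs)
    (hTaylor : ∀ πb ∈ ({π, πs} :
        Set (EuclideanSpace ℝ (Fin d) → EuclideanSpace ℝ (Fin m))),
      ∀ x x₀ : EuclideanSpace ℝ (Fin d),
        ‖πb x - ∑ j ∈ Finset.range (p + 1), ((j.factorial : ℝ))⁻¹ •
            (iteratedFDeriv ℝ j πb x₀) (fun _ => x - x₀)‖ ≤
          L / ((p + 1).factorial : ℝ) * ‖x - x₀‖ ^ (p + 1))
    (hrel : ∀ x : ℝ, 0 ≤ x → x ≤ α →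
      γ (2 * (L / ((p + 1).factorial : ℝ)) * x ^ (p + 1) + (x / μ) ^ r) ≤ x)
    (Δd : ℕ → ℕ → ℝ)
    (hΔd : ∀ j t, Δd j t =
      ‖iteratedFDeriv ℝ j π (traj f πs (fun _ => 0) ξ t) -
        iteratedFDeriv ℝ j πs (traj f πs (fun _ => 0) ξ t)‖)
    (hcond1 : ∀ t < T, ∀ j ≤ p,
      μ * (2 / (j.factorial : ℝ) * Δd j t) ^ (1 / r) ≤ α)
    (hcond2 : ∀ t < T, ∀ j ≤ p,
      2 * L * μ ^ (p + 1) / ((p + 1).factorial : ℝ) *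
          (2 / (j.factorial : ℝ) * Δd j t) ^ (((p : ℝ) + 1) / r) +
        2 / (j.factorial : ℝ) * Δd j t ≤ η) :
    ∀ t, ∀ ht : 1 ≤ t, t ≤ T →
      ‖traj f πs (fun _ => 0) ξ t - traj f π (fun _ => 0) ξ t‖ ≤
        (Finset.range t).sup' (Finset.nonempty_range_iff.mpr (by omega)) fun k =>
          (Finset.range (p + 1)).sup' (Finset.nonempty_range_iff.mpr (Nat.succ_ne_zero p))
            fun j => μ * (2 / (j.factorial : ℝ) * Δd j k) ^ (1 / r) := by
  obtain ⟨hKL, hK, hiss⟩ := hISS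
  have hr0 : r ≠ 0 := by linarith
  have hfacnn : ∀ j : ℕ, (0:ℝ) < (j.factorial : ℝ) := fun j => by
    exact_mod_cast j.factorial_pos
  have hΔd0 : ∀ j k, 0 ≤ Δd j k := fun j k => by rw [hΔd]; positivity
  -- abbreviations
  set xs : ℕ → EuclideanSpace ℝ (Fin d) := traj f πs (fun _ => 0) ξ with hxs
  set xp : ℕ → EuclideanSpace ℝ (Fin d) := traj f π (fun _ => 0) ξ with hxp
  set g : ℕ → ℝ := fun k => (Finset.range (p + 1)).sup'
      (Finset.nonempty_range_iff.mpr (Nat.succ_ne_zero p))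
      (fun j => μ * (2 / (j.factorial : ℝ) * Δd j k) ^ (1 / r)) with hg
  -- main induction
  have main : ∀ t, t ≤ T → ∀ hne : (Finset.range t).Nonempty,
      ‖xs t - xp t‖ ≤ (Finset.range t).sup' hne g := by
    intro t
    induction t using Nat.strong_induction_on with
    | _ t IH =>
    intro htT hne
    have ht1 : 1 ≤ t := by
      rcases Finset.nonempty_range_iff.mp hne with h
      omega
    set e : ℝ := (Finset.range t).sup' hne g with he_def
    -- each term bounded by e
    have hgle : ∀ k < t, ∀ j ≤ p,
        μ * (2 / (j.factorial : ℝ) * Δd j k) ^ (1 / r) ≤ e := by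
      intro k hk j hj
      have h1 : μ * (2 / (j.factorial : ℝ) * Δd j k) ^ (1 / r) ≤ g k :=
        Finset.le_sup' (fun j => μ * (2 / (j.factorial : ℝ) * Δd j k) ^ (1 / r))
          (Finset.mem_range.mpr (Nat.lt_succ_of_le hj))
      exact h1.trans (Finset.le_sup' g (Finset.mem_range.mpr hk))
    -- attain the max
    obtain ⟨k₀, hk₀m, hek₀⟩ := Finset.exists_mem_eq_sup' hne g
    obtain ⟨j₀, hj₀m, hej₀⟩ := Finset.exists_mem_eq_sup'
      (Finset.nonempty_range_iff.mpr (Nat.succ_ne_zero p))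
      (fun j => μ * (2 / (j.factorial : ℝ) * Δd j k₀) ^ (1 / r))
    have hk₀ : k₀ < t := Finset.mem_range.mp hk₀m
    have hj₀ : j₀ ≤ p := by have := Finset.mem_range.mp hj₀m; omega
    set D : ℝ := 2 / (j₀.factorial : ℝ) * Δd j₀ k₀ with hD_def
    have hD0 : 0 ≤ D := by
      have := hΔd0 j₀ k₀; have := hfacnn j₀; positivity
    have he : e = μ * D ^ (1 / r) := by rw [he_def, hek₀]; exact hej₀
    have he0 : 0 ≤ e := by rw [he]; positivity
    have heα : e ≤ α := by rw [he]; exact hcond1 k₀ (hk₀.trans_le htT) j₀ hj₀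
    have he2 : e ≤ 1 / 2 := heα.trans hα
    have hEr : (e / μ) ^ r = D := by
      have heμ : e / μ = D ^ (1 / r) := by
        rw [he]; field_simp
      rw [heμ, ← Real.rpow_mul hD0, one_div_mul_cancel hr0, Real.rpow_one]
    have hep1 : e ^ (p + 1) = μ ^ (p + 1) * D ^ (((p:ℝ) + 1) / r) := by
      rw [he, mul_pow, ← Real.rpow_natCast (D ^ (1/r)) (p + 1),
        ← Real.rpow_mul hD0]
      congr 1
      push_cast
      ring
    have hDle : ∀ k < t, ∀ j ≤ p, 2 / (j.factorial : ℝ) * Δd j k ≤ D := by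
      intro k hk j hj
      set x : ℝ := 2 / (j.factorial : ℝ) * Δd j k with hx_def
      have hx0 : 0 ≤ x := by
        have := hΔd0 j k; have := hfacnn j; positivity
      have h1 : x ^ (1 / r) ≤ D ^ (1 / r) := by
        have := hgle k hk j hj
        rw [he] at this
        exact le_of_mul_le_mul_left (by exact this) hμ
      calc x = (x ^ (1 / r)) ^ r := by
            rw [← Real.rpow_mul hx0, one_div_mul_cancel hr0, Real.rpow_one]
        _ ≤ (D ^ (1 / r)) ^ r :=
            Real.rpow_le_rpow (Real.rpow_nonneg hx0 _) h1 (by linarith)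
        _ = D := by
            rw [← Real.rpow_mul hD0, one_div_mul_cancel hr0, Real.rpow_one]
    -- error at times k < t
    have hek : ∀ k < t, ‖xp k - xs k‖ ≤ e := by
      intro k hk
      rcases Nat.eq_zero_or_pos k with hk0 | hk1
      · subst hk0
        have : xs 0 = ξ := by rw [hxs]; rfl
        have h2 : xp 0 = ξ := by rw [hxp]; rfl
        rw [this, h2, sub_self, norm_zero]; exact he0
      · have hki := IH k hk (by omega) (Finset.nonempty_range_iff.mpr (by omega))
        rw [norm_sub_rev]
        refine hki.trans (Finset.sup'_le _ _ fun k' hk' => ?_)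
        exact Finset.le_sup' g (Finset.mem_range.mpr
          (lt_trans (Finset.mem_range.mp hk') hk))
    -- the key bound on the perturbation
    have hΔnorm : ∀ k < t, ‖π (xp k) - πs (xp k)‖ ≤
        2 * (L / ((p + 1).factorial : ℝ)) * e ^ (p + 1) + D := by
      intro k hk
      have hT := taylorDiff p L π πs
        (hTaylor π (Set.mem_insert _ _))
        (hTaylor πs (Set.mem_insert_iff.mpr (Or.inr rfl)))
        (xp k) (xs k)
      have hekk := hek k hk
      have hek0 : (0:ℝ) ≤ ‖xp k - xs k‖ := norm_nonneg _
      have hsum : ∑ j ∈ Finset.range (p + 1), ((j.factorial : ℝ))⁻¹ *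
          ‖iteratedFDeriv ℝ j π (xs k) - iteratedFDeriv ℝ j πs (xs k)‖ *
            ‖xp k - xs k‖ ^ j ≤ D := by
        have hstep : ∀ j ∈ Finset.range (p + 1), ((j.factorial : ℝ))⁻¹ *
            ‖iteratedFDeriv ℝ j π (xs k) - iteratedFDeriv ℝ j πs (xs k)‖ *
              ‖xp k - xs k‖ ^ j ≤ 1 / 2 * D * e ^ j := by
          intro j hj
          have hjp : j ≤ p := by have := Finset.mem_range.mp hj; omega
          have hcoef : ((j.factorial : ℝ))⁻¹ *
              ‖iteratedFDeriv ℝ j π (xs k) - iteratedFDeriv ℝ j πs (xs k)‖ ≤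
                1 / 2 * D := by
            have h2 := hDle k hk j hjp
            rw [hΔd j k] at h2
            have : ((j.factorial : ℝ))⁻¹ *
                ‖iteratedFDeriv ℝ j π (xs k) - iteratedFDeriv ℝ j πs (xs k)‖ =
                1 / 2 * (2 / (j.factorial : ℝ) *
                  ‖iteratedFDeriv ℝ j π (xs k) - iteratedFDeriv ℝ j πs (xs k)‖) := by
              ring
            rw [this]
            linarith
          have hpow : ‖xp k - xs k‖ ^ j ≤ e ^ j := pow_le_pow_left₀ hek0 hekk j
          have hc0 : (0:ℝ) ≤ ((j.factorial : ℝ))⁻¹ *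
              ‖iteratedFDeriv ℝ j π (xs k) - iteratedFDeriv ℝ j πs (xs k)‖ := by
            have := hfacnn j; positivity
          exact mul_le_mul hcoef hpow (by positivity) (by positivity)
        calc _ ≤ ∑ j ∈ Finset.range (p + 1), 1 / 2 * D * e ^ j :=
              Finset.sum_le_sum hstep
          _ = 1 / 2 * D * ∑ j ∈ Finset.range (p + 1), e ^ j := by
              rw [Finset.mul_sum]
          _ ≤ 1 / 2 * D * 2 := by
              exact mul_le_mul_of_nonneg_left (geomAux (p + 1) e he0 he2)
                (by positivity)
          _ = D := by ring
      have hpow1 : ‖xp k - xs k‖ ^ (p + 1) ≤ e ^ (p + 1) :=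
        pow_le_pow_left₀ hek0 hekk (p + 1)
      have hc1 : (0:ℝ) ≤ 2 * (L / ((p + 1).factorial : ℝ)) := by
        have := hfacnn (p + 1); positivity
      nlinarith [hT, hsum, hpow1]
    -- the perturbation sequence
    set Δtr : ℕ → EuclideanSpace ℝ (Fin m) := fun k =>
      if k < t then π (xp k) - πs (xp k) else 0 with hΔtr
    have hBη : 2 * (L / ((p + 1).factorial : ℝ)) * e ^ (p + 1) + D ≤ η := by
      have h2 := hcond2 k₀ (hk₀.trans_le htT) j₀ hj₀
      rw [hep1]
      rw [hD_def]
      calc 2 * (L / ((p + 1).factorial : ℝ)) *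
            (μ ^ (p + 1) * (2 / (j₀.factorial : ℝ) * Δd j₀ k₀) ^ (((p:ℝ) + 1) / r)) +
            2 / (j₀.factorial : ℝ) * Δd j₀ k₀
          = 2 * L * μ ^ (p + 1) / ((p + 1).factorial : ℝ) *
            (2 / (j₀.factorial : ℝ) * Δd j₀ k₀) ^ (((p:ℝ) + 1) / r) +
            2 / (j₀.factorial : ℝ) * Δd j₀ k₀ := by ring
        _ ≤ η := h2
    have hΔη : ∀ s, ‖Δtr s‖ ≤ η := by
      intro s
      by_cases hs : s < t
      · simp only [hΔtr, if_pos hs]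
        exact (hΔnorm s hs).trans hBη
      · simp only [hΔtr, if_neg hs, norm_zero]
        exact hη.le
    -- trajectory identification
    have hclaimA : ∀ s, s ≤ t → traj f πs Δtr ξ s = xp s := by
      intro s
      induction s with
      | zero => intro _; rw [hxp]; rfl
      | succ s ihs =>
        intro hst
        have hs : s < t := by omega
        have hxps : traj f πs Δtr ξ s = xp s := ihs (by omega)
        show f (traj f πs Δtr ξ s) (πs (traj f πs Δtr ξ s) + Δtr s) = xp (s + 1)
        rw [hxps]
        have : Δtr s = π (xp s) - πs (xp s) := by rw [hΔtr]; simp [hs]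
        rw [this]
        have : πs (xp s) + (π (xp s) - πs (xp s)) = π (xp s) + 0 := by abel
        rw [this, hxp]
        rfl
    -- apply ISS
    have ht0 : 0 < t := ht1
    have hISSapp := hiss ξ ξ Δtr hΔη t ht0
    rw [hclaimA t le_rfl] at hISSapp
    have hβ0 : β ‖ξ - ξ‖ t = 0 := by
      rw [sub_self, norm_zero]
      exact (hKL.1 t).2.2
    rw [hβ0, zero_add] at hISSapp
    -- bound γ term
    have hsup0 : (0:ℝ) ≤ (Finset.range t).sup'
        (Finset.nonempty_range_iff.mpr ht0.ne') fun k => ‖Δtr k‖ := by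
      refine le_trans (norm_nonneg (Δtr 0)) ?_
      exact Finset.le_sup' (fun k => ‖Δtr k‖) (Finset.mem_range.mpr ht0)
    have hsupB : ((Finset.range t).sup'
        (Finset.nonempty_range_iff.mpr ht0.ne') fun k => ‖Δtr k‖) ≤
        2 * (L / ((p + 1).factorial : ℝ)) * e ^ (p + 1) + (e / μ) ^ r := by
      rw [hEr]
      refine Finset.sup'_le _ _ fun k hk => ?_
      have hkt : k < t := Finset.mem_range.mp hk
      have : Δtr k = π (xp k) - πs (xp k) := by rw [hΔtr]; simp [hkt]
      rw [this]
      exact hΔnorm k hkt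
    have hB0 : (0:ℝ) ≤ 2 * (L / ((p + 1).factorial : ℝ)) * e ^ (p + 1) + (e / μ) ^ r := by
      have := hfacnn (p + 1)
      have h1 : (0:ℝ) ≤ (e / μ) ^ r := by rw [hEr]; exact hD0
      positivity
    have hγmono := hK.2.1.monotoneOn
    have hγle : γ ((Finset.range t).sup'
        (Finset.nonempty_range_iff.mpr ht0.ne') fun k => ‖Δtr k‖) ≤
        γ (2 * (L / ((p + 1).factorial : ℝ)) * e ^ (p + 1) + (e / μ) ^ r) :=
      hγmono (Set.mem_Ici.mpr hsup0) (Set.mem_Ici.mpr hB0) hsupB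
    have hγe := hrel e he0 heα
    rw [norm_sub_rev]
    calc ‖xp t - xs t‖ ≤ _ := hISSapp
      _ ≤ γ (2 * (L / ((p + 1).factorial : ℝ)) * e ^ (p + 1) + (e / μ) ^ r) := hγle
      _ ≤ e := hγe
  intro t ht htT
  exact main t htT (Finset.nonempty_range_iff.mpr (by omega))
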